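/- For every n ≥ 1, there is exactly one league outcome with n teams in which every team has total points exactly 2(n−1), namely the outcome in which every match is a draw. -/

import Mathlib

open Finset

inductive MatchResult : Type
  | homeWin : MatchResult
  | draw : MatchResult
  | awayWin : MatchResult
  deriving DecidableEq

instance : Fintype MatchResult where
  elems := {MatchResult.homeWin, MatchResult.draw, MatchResult.awayWin}
  complete := by
    intro x
    cases x <;> simp

/-- A league outcome: a result for each ordered pair of distinct teams
(the first component is the home team). -/
abbrev LeagueOutcome (n : ℕ) : Type :=
  {p : Fin n × Fin n // p.1 ≠ p.2} → MatchResult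

/-- Points earned by the home team. -/
def homePts : MatchResult → ℕ
  | .homeWin => 3
  | .draw => 1
  | .awayWin => 0

/-- Points earned by the away team. -/
def awayPts : MatchResult → ℕ
  | .homeWin => 0
  | .draw => 1
  | .awayWin => 3

/-- Total points of team `i`: sum over all matches of the points `i` earns in them. -/
def totalPoints {n : ℕ} (r : LeagueOutcome n) (i : Fin n) : ℕ :=
  ∑ m : {p : Fin n × Fin n // p.1 ≠ p.2},
    ((if m.val.1 = i then homePts (r m) else 0) +
     (if m.val.2 = i then awayPts (r m) else 0))

/-- Total points the other teams earn in their matches against team `i`. -/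
def oppPoints {n : ℕ} (r : LeagueOutcome n) (i : Fin n) : ℕ :=
  ∑ m : {p : Fin n × Fin n // p.1 ≠ p.2},
    ((if m.val.1 = i then awayPts (r m) else 0) +
     (if m.val.2 = i then homePts (r m) else 0))

/-- Number of matches that team `i` wins. -/
def wins {n : ℕ} (r : LeagueOutcome n) (i : Fin n) : ℕ :=
  (Finset.univ.filter (fun m : {p : Fin n × Fin n // p.1 ≠ p.2} =>
    (m.val.1 = i ∧ r m = .homeWin) ∨ (m.val.2 = i ∧ r m = .awayWin))).card

/-- Number of matches that team `i` draws. -/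
def draws {n : ℕ} (r : LeagueOutcome n) (i : Fin n) : ℕ :=
  (Finset.univ.filter (fun m : {p : Fin n × Fin n // p.1 ≠ p.2} =>
    (m.val.1 = i ∨ m.val.2 = i) ∧ r m = .draw)).card

/-- Number of matches that team `i` loses. -/
def losses {n : ℕ} (r : LeagueOutcome n) (i : Fin n) : ℕ :=
  (Finset.univ.filter (fun m : {p : Fin n × Fin n // p.1 ≠ p.2} =>
    (m.val.1 = i ∧ r m = .awayWin) ∨ (m.val.2 = i ∧ r m = .homeWin))).card

/-! A drawn match hands out 2 points in total and a decided one 3, so the points of all teams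
add up to at least twice the number of matches, with equality only if every match is drawn.
The all-draw outcome gives each team 2 points from each of its `2(n-1)` matches, so any
outcome with the same score table has the same point total and must be all draws. -/

lemma two_le_homePts_add_awayPts (x : MatchResult) : 2 ≤ homePts x + awayPts x := by
  cases x <;> decide

lemma homePts_add_awayPts_eq_two_iff {x : MatchResult} :
    homePts x + awayPts x = 2 ↔ x = .draw := by
  cases x <;> decide

lemma sum_totalPoints {n : ℕ} (r : LeagueOutcome n) :
    ∑ i, totalPoints r i = ∑ m, (homePts (r m) + awayPts (r m)) := by
  simp only [totalPoints]
  rw [sum_comm]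
  simp [sum_add_distrib]

lemma card_filter_home_eq {n : ℕ} (i : Fin n) :
    #{m : {p : Fin n × Fin n // p.1 ≠ p.2} | m.1.1 = i} = n - 1 := by
  rw [show n - 1 = #(univ.erase i) by simp]
  refine card_bij (fun m _ => m.1.2) ?_ ?_ ?_
  · intro m hm
    simp only [mem_filter, mem_univ, true_and] at hm
    simpa [← hm] using m.2.symm
  · intro m hm m' hm' h
    simp only [mem_filter, mem_univ, true_and] at hm hm'
    exact Subtype.ext (Prod.ext (hm.trans hm'.symm) h)
  · intro j hj
    exact ⟨⟨(i, j), (ne_of_mem_erase hj).symm⟩, by simp⟩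

lemma card_filter_away_eq {n : ℕ} (i : Fin n) :
    #{m : {p : Fin n × Fin n // p.1 ≠ p.2} | m.1.2 = i} = n - 1 := by
  rw [show n - 1 = #(univ.erase i) by simp]
  refine card_bij (fun m _ => m.1.1) ?_ ?_ ?_
  · intro m hm
    simp only [mem_filter, mem_univ, true_and] at hm
    simpa [← hm] using m.2
  · intro m hm m' hm' h
    simp only [mem_filter, mem_univ, true_and] at hm hm'
    exact Subtype.ext (Prod.ext h (hm.trans hm'.symm))
  · intro j hj
    exact ⟨⟨(j, i), ne_of_mem_erase hj⟩, by simp⟩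

lemma totalPoints_const_draw {n : ℕ} (i : Fin n) :
    totalPoints (fun _ => MatchResult.draw : LeagueOutcome n) i = 2 * (n - 1) := by
  simp only [totalPoints, homePts, awayPts, sum_add_distrib, sum_boole, Nat.cast_id,
    card_filter_home_eq, card_filter_away_eq]
  ring

lemma eq_const_draw_of_sum_totalPoints_eq {n : ℕ} (r : LeagueOutcome n)
    (h : ∑ i, totalPoints r i =
      ∑ i, totalPoints (fun _ => MatchResult.draw : LeagueOutcome n) i) :
    r = fun _ => MatchResult.draw := by
  simp only [sum_totalPoints, homePts, awayPts] at h
  have hmatch := (sum_eq_sum_iff_of_le fun m _ => two_le_homePts_add_awayPts (r m)).1 h.symm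
  exact funext fun m => homePts_add_awayPts_eq_two_iff.1 (hmatch m (mem_univ m)).symm

theorem unique_min_score_outcome_general (n : ℕ) :
    (∀ i, totalPoints (fun _ => MatchResult.draw : LeagueOutcome n) i = 2 * (n - 1)) ∧
      ∀ r : LeagueOutcome n, (∀ i, totalPoints r i = 2 * (n - 1)) →
        r = fun _ => MatchResult.draw :=
  ⟨totalPoints_const_draw, fun r hr =>
    eq_const_draw_of_sum_totalPoints_eq r (by simp only [hr, totalPoints_const_draw])⟩

/-- for `n ≥ 1` the all-draw outcome is the unique outcome in which
every team has exactly `2(n−1)` points. -/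
theorem unique_min_score_outcome (n : ℕ) (hn : 1 ≤ n) :
    (∀ i, totalPoints (fun _ => MatchResult.draw : LeagueOutcome n) i = 2 * (n - 1)) ∧
      ∀ r : LeagueOutcome n, (∀ i, totalPoints r i = 2 * (n - 1)) →
        r = fun _ => MatchResult.draw :=
  unique_min_score_outcome_general n
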